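/- arXiv:0902.1951 — 4 statements merged into one kernel-verified Lean document; each statement's English description precedes it below -/
import Mathlib

section
/- Let Ω ⊆ ℂ be a nonempty connected open set and let f, g : Ω → ℂ be holomorphic functions with nowhere-vanishing derivatives. If S(f)(z) = S(g)(z) for all z ∈ Ω, then f and g differ by post-composition with a Möbius transformation: there exist a, b, c, d ∈ ℂ with ad − bc = 1 such that for every z ∈ Ω, c·g(z) + d ≠ 0 and f(z) = (a·g(z) + b)/(c·g(z) + d). -/
/-!
Post-composition with a Möbius map leaves the Schwarzian unchanged, and at any point `z₀` some
Möbius map `M` makes `M ∘ g` agree with `f` to second order. Two functions with the same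
Schwarzian and the same 2-jet agree near `z₀`: their pre-Schwarzians `p = f''/f'` and `q = h''/h'`
solve the same Riccati equation `p' - p²/2 = S`, so `(p - q)² / (f' h')` has zero derivative and
vanishes; then `f'/h'` and `f - h` are constant. The identity theorem, applied to
`f (c g + d) - (a g + b)`, spreads the equality over the connected domain.
-/

open Filter Set Metric Topology

/-- The Schwarzian derivative `S(f) = (f''/f')' - (1/2) (f''/f')²`. -/
noncomputable def schwarzian (f : ℂ → ℂ) : ℂ → ℂ := fun z =>
  deriv (fun w => deriv (deriv f) w / deriv f w) z -
    (1 / 2) * (deriv (deriv f) z / deriv f z) ^ 2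

theorem schwarzian_eq_deriv_logDeriv_deriv (f : ℂ → ℂ) (z : ℂ) :
    schwarzian f z = deriv (logDeriv (deriv f)) z - 1 / 2 * logDeriv (deriv f) z ^ 2 :=
  rfl

section Uniqueness

variable {f h : ℂ → ℂ} {U : Set ℂ} {z₀ : ℂ}

theorem eqOn_logDeriv_deriv_of_schwarzian_eqOn (hU : IsOpen U) (hU' : IsPreconnected U)
    (hf : DifferentiableOn ℂ f U) (hh : DifferentiableOn ℂ h U)
    (hf' : ∀ z ∈ U, deriv f z ≠ 0) (hh' : ∀ z ∈ U, deriv h z ≠ 0)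
    (hS : EqOn (schwarzian f) (schwarzian h) U) (hz₀ : z₀ ∈ U)
    (h₀ : logDeriv (deriv f) z₀ = logDeriv (deriv h) z₀) :
    EqOn (logDeriv (deriv f)) (logDeriv (deriv h)) U := by
  set u := deriv f
  set v := deriv h
  set p := logDeriv u
  set q := logDeriv v
  have hu : DifferentiableOn ℂ u U := hf.deriv hU
  have hv : DifferentiableOn ℂ v U := hh.deriv hU
  have hp : DifferentiableOn ℂ p U := (hu.deriv hU).div hu hf'
  have hq : DifferentiableOn ℂ q U := (hv.deriv hU).div hv hh'
  have huv : ∀ z ∈ U, u z * v z ≠ 0 := fun z hz => mul_ne_zero (hf' z hz) (hh' z hz)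
  set w : ℂ → ℂ := fun z => (p z - q z) ^ 2 / (u z * v z)
  have hw : DifferentiableOn ℂ w U := ((hp.sub hq).pow 2).div (hu.mul hv) huv
  have hw' : EqOn (deriv w) 0 U := by
    intro z hz
    have hat {φ : ℂ → ℂ} (hφ : DifferentiableOn ℂ φ U) : HasDerivAt φ (deriv φ z) z :=
      (hφ.differentiableAt (hU.mem_nhds hz)).hasDerivAt
    have hu' : deriv u z = p z * u z := (div_mul_cancel₀ _ (hf' z hz)).symm
    have hv' : deriv v z = q z * v z := (div_mul_cancel₀ _ (hh' z hz)).symm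
    have hSz : deriv p z - 1 / 2 * p z ^ 2 = deriv q z - 1 / 2 * q z ^ 2 := hS hz
    rw [HasDerivAt.deriv (f := w)
        ((((hat hp).sub (hat hq)).pow 2).div ((hat hu).mul (hat hv)) (huv z hz)),
      Pi.zero_apply, div_eq_zero_iff]
    left
    simp only [Pi.sub_apply, Pi.pow_apply]
    linear_combination 2 * (p z - q z) * u z * v z * hSz - (p z - q z) ^ 2 * v z * hu'
      - (p z - q z) ^ 2 * u z * hv'
  intro z hz
  have hwz : w z = 0 := (hU.is_const_of_deriv_eq_zero hU' hw hw' hz hz₀).trans (by simp [w, h₀])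
  simpa [w, sub_eq_zero, hf' z hz, hh' z hz] using hwz

theorem eqOn_of_schwarzian_eqOn (hU : IsOpen U) (hU' : IsPreconnected U)
    (hf : DifferentiableOn ℂ f U) (hh : DifferentiableOn ℂ h U)
    (hf' : ∀ z ∈ U, deriv f z ≠ 0) (hh' : ∀ z ∈ U, deriv h z ≠ 0)
    (hS : EqOn (schwarzian f) (schwarzian h) U) (hz₀ : z₀ ∈ U)
    (h₀ : f z₀ = h z₀) (h₁ : deriv f z₀ = deriv h z₀)
    (h₂ : logDeriv (deriv f) z₀ = logDeriv (deriv h) z₀) :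
    EqOn f h U := by
  obtain ⟨k, -, hk⟩ := (logDeriv_eqOn_iff (hf.deriv hU) (hh.deriv hU) hU hU' hh' hf').1 <|
    eqOn_logDeriv_deriv_of_schwarzian_eqOn hU hU' hf hh hf' hh' hS hz₀ h₂
  have hk₁ : k = 1 := by
    have := hk hz₀
    simp only [Pi.smul_apply, smul_eq_mul, h₁] at this
    exact (mul_eq_right₀ (hh' z₀ hz₀)).1 this.symm
  refine hU.eqOn_of_deriv_eq hU' hf hh (fun z hz => ?_) hz₀ h₀
  simpa [hk₁] using hk hz

end Uniqueness

noncomputable def mobius (a b c d w : ℂ) : ℂ :=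
  (a * w + b) / (c * w + d)

theorem mobius_denom_ne_zero {a b c d x y : ℂ} (hdet : a * d - b * c ≠ 0)
    (h : y * (c * x + d) = a * x + b) : c * x + d ≠ 0 := by
  intro h0
  have h1 : a * x + b = 0 := by rw [← h, h0, mul_zero]
  exact hdet (by linear_combination a * h0 - c * h1)

-- `x, x₁, q` and `y, y₁, p` are the value, derivative and `logDeriv ∘ deriv` at a point of
-- `g` and of the target `f`; the denominator `e = c x + d` is a square root of `x₁ / y₁`.
theorem exists_mobius_matching (x x₁ q y y₁ p : ℂ) (hx₁ : x₁ ≠ 0) (hy₁ : y₁ ≠ 0) :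
    ∃ a b c d : ℂ, a * d - b * c = 1 ∧ c * x + d ≠ 0 ∧ mobius a b c d x = y ∧
      x₁ / (c * x + d) ^ 2 = y₁ ∧ q - 2 * c * x₁ / (c * x + d) = p := by
  obtain ⟨e, he⟩ := IsAlgClosed.exists_pow_nat_eq (x₁ / y₁) two_pos
  have he₀ : e ≠ 0 := by rintro rfl; simp [hx₁, hy₁, eq_comm] at he
  set c := e * (q - p) / (2 * x₁)
  set a := 1 / e + c * y
  have hden : c * x + (e - c * x) = e := by ring
  refine ⟨a, e * y - a * x, c, e - c * x, ?_, ?_, ?_, ?_, ?_⟩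
  · simp only [a]
    field_simp
    ring
  · rwa [hden]
  · rw [mobius, hden]
    field_simp
    ring
  · rw [hden, he]
    field_simp
  · rw [hden]
    simp only [c]
    field_simp
    ring

section Mobius

variable {a b c d : ℂ} {g : ℂ → ℂ} {z : ℂ}

theorem eventually_mobius_denom_ne_zero (hg : ContinuousAt g z) (hz : c * g z + d ≠ 0) :
    ∀ᶠ w in 𝓝 z, c * g w + d ≠ 0 :=
  ((continuousAt_const.mul hg).add continuousAt_const).eventually_ne hz

theorem hasDerivAt_mobius_comp {g' : ℂ} (hg : HasDerivAt g g' z) (hz : c * g z + d ≠ 0) :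
    HasDerivAt (fun w => mobius a b c d (g w)) ((a * d - b * c) * g' / (c * g z + d) ^ 2) z := by
  have h := ((hg.const_mul a).add_const b).fun_div ((hg.const_mul c).add_const d) hz
  exact h.congr_deriv (by ring)

theorem deriv_mobius_comp_eventuallyEq (hg : AnalyticAt ℂ g z) (hz : c * g z + d ≠ 0) :
    deriv (fun w => mobius a b c d (g w)) =ᶠ[𝓝 z]
      fun w => (a * d - b * c) * deriv g w / (c * g w + d) ^ 2 := by
  filter_upwards [hg.eventually_analyticAt, eventually_mobius_denom_ne_zero hg.continuousAt hz]
    with w hgw hw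
  exact (hasDerivAt_mobius_comp hgw.differentiableAt.hasDerivAt hw).deriv

theorem logDeriv_deriv_mobius_comp_eventuallyEq (hg : AnalyticAt ℂ g z)
    (hdet : a * d - b * c ≠ 0) (hz : c * g z + d ≠ 0) :
    logDeriv (deriv fun w => mobius a b c d (g w)) =ᶠ[𝓝 z]
      fun w => logDeriv (deriv g) w - 2 * c * deriv g w / (c * g w + d) := by
  filter_upwards [hg.eventually_analyticAt, eventually_mobius_denom_ne_zero hg.continuousAt hz,
    (deriv_mobius_comp_eventuallyEq hg hz).eventuallyEq_nhds] with w hgw hw hM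
  have hM' := (hgw.deriv.differentiableAt.hasDerivAt.const_mul (a * d - b * c)).fun_div
    (((hgw.differentiableAt.hasDerivAt.const_mul c).add_const d).fun_pow 2) (pow_ne_zero 2 hw)
  rw [logDeriv_apply, logDeriv_apply, hM.deriv_eq, hM'.deriv, hM.eq_of_nhds]
  simp only [Nat.cast_ofNat, Nat.add_one_sub_one, pow_one]
  -- at a critical point of `g` both sides are `0`, by the convention `x / 0 = 0`
  by_cases hg'w : deriv g w = 0
  · simp [hg'w]
  · field_simp

theorem schwarzian_mobius_comp (hg : AnalyticAt ℂ g z) (hg' : deriv g z ≠ 0)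
    (hdet : a * d - b * c ≠ 0) (hz : c * g z + d ≠ 0) :
    schwarzian (fun w => mobius a b c d (g w)) z = schwarzian g z := by
  have hL := logDeriv_deriv_mobius_comp_eventuallyEq hg hdet hz
  have hP : HasDerivAt (logDeriv (deriv g)) (deriv (logDeriv (deriv g)) z) z :=
    (hg.deriv.deriv.div hg.deriv hg').differentiableAt.hasDerivAt
  have hR := (hg.deriv.differentiableAt.hasDerivAt.const_mul (2 * c)).fun_div
    ((hg.differentiableAt.hasDerivAt.const_mul c).add_const d) hz
  rw [schwarzian_eq_deriv_logDeriv_deriv, schwarzian_eq_deriv_logDeriv_deriv, hL.deriv_eq,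
    (hP.fun_sub hR).deriv, hL.eq_of_nhds, logDeriv_apply]
  field_simp
  ring

end Mobius

theorem exists_mobius_eventuallyEq_of_schwarzian_eqOn {f g : ℂ → ℂ} {U : Set ℂ} {z₀ : ℂ}
    (hU : IsOpen U) (hz₀ : z₀ ∈ U)
    (hf : DifferentiableOn ℂ f U) (hf' : ∀ z ∈ U, deriv f z ≠ 0)
    (hg : DifferentiableOn ℂ g U) (hg' : ∀ z ∈ U, deriv g z ≠ 0)
    (hS : EqOn (schwarzian f) (schwarzian g) U) :
    ∃ a b c d : ℂ, a * d - b * c = 1 ∧ c * g z₀ + d ≠ 0 ∧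
      f =ᶠ[𝓝 z₀] fun z => mobius a b c d (g z) := by
  have hga : AnalyticOnNhd ℂ g U := hg.analyticOnNhd hU
  obtain ⟨a, b, c, d, hdet, hden, h₀, h₁, h₂⟩ := exists_mobius_matching (g z₀) (deriv g z₀)
    (logDeriv (deriv g) z₀) (f z₀) (deriv f z₀) (logDeriv (deriv f) z₀) (hg' z₀ hz₀) (hf' z₀ hz₀)
  have hdet₀ : a * d - b * c ≠ 0 := hdet ▸ one_ne_zero
  obtain ⟨r, hr, hB⟩ := eventually_nhds_iff_ball.1 <|
    (hU.eventually_mem hz₀).and (eventually_mobius_denom_ne_zero (hga z₀ hz₀).continuousAt hden)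
  have hBU : ball z₀ r ⊆ U := fun z hz => (hB z hz).1
  have hM : ∀ z ∈ ball z₀ r, HasDerivAt (fun w => mobius a b c d (g w))
      (deriv g z / (c * g z + d) ^ 2) z := fun z hz => by
    simpa [hdet] using hasDerivAt_mobius_comp (a := a) (b := b)
      (hga z (hBU hz)).differentiableAt.hasDerivAt (hB z hz).2
  have hz₀B : z₀ ∈ ball z₀ r := mem_ball_self hr
  refine ⟨a, b, c, d, hdet, hden, eventuallyEq_of_mem (ball_mem_nhds z₀ hr) ?_⟩
  refine eqOn_of_schwarzian_eqOn isOpen_ball (convex_ball z₀ r).isPreconnected (hf.mono hBU)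
    (fun z hz => (hM z hz).differentiableAt.differentiableWithinAt) (fun z hz => hf' z (hBU hz))
    (fun z hz => ?_) (fun z hz => ?_) hz₀B h₀.symm ?_ ?_
  · rw [(hM z hz).deriv]
    exact div_ne_zero (hg' z (hBU hz)) (pow_ne_zero 2 (hB z hz).2)
  · exact (hS (hBU hz)).trans
      (schwarzian_mobius_comp (hga z (hBU hz)) (hg' z (hBU hz)) hdet₀ (hB z hz).2).symm
  · rw [(hM z₀ hz₀B).deriv, h₁]
  · rw [(logDeriv_deriv_mobius_comp_eventuallyEq (hga z₀ hz₀) hdet₀ hden).eq_of_nhds, h₂]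

/-- Two holomorphic functions with nowhere-vanishing derivatives on a nonempty
connected open set that have the same Schwarzian derivative differ by
post-composition with a Möbius transformation. -/
theorem eq_mobius_comp_of_schwarzian_eq (Ω : Set ℂ) (hΩ : IsOpen Ω) (hconn : IsConnected Ω)
    (f g : ℂ → ℂ)
    (hf : DifferentiableOn ℂ f Ω) (hf' : ∀ z ∈ Ω, deriv f z ≠ 0)
    (hg : DifferentiableOn ℂ g Ω) (hg' : ∀ z ∈ Ω, deriv g z ≠ 0)
    (hS : ∀ z ∈ Ω, schwarzian f z = schwarzian g z) :
    ∃ a b c d : ℂ, a * d - b * c = 1 ∧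
      ∀ z ∈ Ω, c * g z + d ≠ 0 ∧ f z = (a * g z + b) / (c * g z + d) := by
  obtain ⟨z₀, hz₀⟩ := hconn.nonempty
  obtain ⟨a, b, c, d, hdet, hden, hloc⟩ :=
    exists_mobius_eventuallyEq_of_schwarzian_eqOn hΩ hz₀ hf hf' hg hg' hS
  have hcross : (fun z => f z * (c * g z + d)) =ᶠ[𝓝 z₀] fun z => a * g z + b := by
    filter_upwards [hloc, eventually_mobius_denom_ne_zero
      (hg.continuousOn.continuousAt (hΩ.mem_nhds hz₀)) hden] with z hz hz'
    rw [hz, mobius, div_mul_cancel₀ _ hz']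
  have hglob : EqOn (fun z => f z * (c * g z + d)) (fun z => a * g z + b) Ω :=
    AnalyticOnNhd.eqOn_of_preconnected_of_eventuallyEq
      ((hf.mul ((hg.const_mul c).add_const d)).analyticOnNhd hΩ)
      (((hg.const_mul a).add_const b).analyticOnNhd hΩ) hconn.isPreconnected hz₀ hcross
  refine ⟨a, b, c, d, hdet, fun z hz => ?_⟩
  have hz' := mobius_denom_ne_zero (hdet ▸ one_ne_zero) (hglob hz)
  exact ⟨hz', eq_div_of_mul_eq hz' (hglob hz)⟩
end

section
/- Let Ω ⊆ ℂ be open and let f : Ω → ℂ be holomorphic with nowhere-vanishing derivative. Suppose G : Ω → M₂(ℂ) is a holomorphic matrix-valued map (each entry holomorphic) with det G(z) = 1 for all z ∈ Ω and such that for each z ∈ Ω the Möbius transformation w ↦ (G(z)₀₀·w + G(z)₀₁)/(G(z)₁₀·w + G(z)₁₁) osculates f at z (same value, first derivative, and second derivative at z, and G(z)₁₀·z + G(z)₁₁ ≠ 0). Then the Darboux derivative of G is determined by the Schwarzian derivative of f: for all z ∈ Ω, G(z)⁻¹ · G'(z) = −(1/2)·S(f)(z) · [[z, −z²],[1, −z]],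 where G' denotes the entrywise derivative and [[z, −z²],[1, −z]] is the 2×2 matrix with rows (z, −z²) and (1, −z). -/
open Filter Topology

section Field

variable {K : Type*} [Field K]

def mobiusDenom (M : Matrix (Fin 2) (Fin 2) K) (w : K) : K :=
  M 1 0 * w + M 1 1

def mobiusMap (M : Matrix (Fin 2) (Fin 2) K) (w : K) : K :=
  (M 0 0 * w + M 0 1) / mobiusDenom M w

theorem inv_mul_eq_inv_mobiusDenom_smul {M : Matrix (Fin 2) (Fin 2) K} {y z : K}
    (hdet : M.det = 1) (hnum : M 0 0 * z + M 0 1 = y * mobiusDenom M z) :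
    M⁻¹ * !![y, -(y * z); 1, -z] = (mobiusDenom M z)⁻¹ • !![z, -z ^ 2; 1, -z] := by
  rw [Matrix.det_fin_two] at hdet
  rw [mobiusDenom] at hnum ⊢
  have hinv : (M 1 0 * z + M 1 1)⁻¹ = M 0 0 - M 1 0 * y :=
    (eq_inv_of_mul_eq_one_right (by linear_combination hdet + M 1 0 * hnum)).symm
  rw [Matrix.inv_def, Matrix.det_fin_two, hdet, Matrix.adjugate_fin_two, Ring.inverse_one,
    one_smul, hinv]
  ext i j
  fin_cases i <;> fin_cases j <;>
    simp only [Matrix.mul_apply, Fin.sum_univ_two, Matrix.smul_apply, smul_eq_mul, Matrix.of_apply,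
      Matrix.cons_val', Matrix.cons_val_zero, Matrix.cons_val_one, Matrix.cons_val_fin_one,
      Fin.isValue, Fin.zero_eta, Fin.mk_one]
  · linear_combination -hnum
  · linear_combination z * hnum
  · ring
  · ring

end Field

theorem HasDerivAt.eq_zero_of_eventually_eq_const {𝕜 F : Type*} [NontriviallyNormedField 𝕜]
    [NormedAddCommGroup F] [NormedSpace 𝕜 F] {u : 𝕜 → F} {u' k : F} {x : 𝕜}
    (h : HasDerivAt u u' x) (hu : ∀ᶠ w in 𝓝 x, u w = k) : u' = 0 :=
  h.unique ((hasDerivAt_const x k).congr_of_eventuallyEq hu)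

section Mobius

variable {𝕜 : Type*} [NontriviallyNormedField 𝕜]

def Osculates (M : Matrix (Fin 2) (Fin 2) 𝕜) (f : 𝕜 → 𝕜) (z : 𝕜) : Prop :=
  mobiusDenom M z ≠ 0 ∧ mobiusMap M z = f z ∧ deriv (mobiusMap M) z = deriv f z ∧
    deriv (deriv (mobiusMap M)) z = deriv (deriv f) z

theorem hasDerivAt_mobiusDenom (M : Matrix (Fin 2) (Fin 2) 𝕜) (x : 𝕜) :
    HasDerivAt (mobiusDenom M) (M 1 0) x :=
  (((hasDerivAt_id x).const_mul (M 1 0)).add_const (M 1 1)).congr_deriv (mul_one _)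

variable {M : Matrix (Fin 2) (Fin 2) 𝕜} {x : 𝕜}

theorem hasDerivAt_mobiusMap (hx : mobiusDenom M x ≠ 0) :
    HasDerivAt (mobiusMap M) (M.det / mobiusDenom M x ^ 2) x := by
  have hnum : HasDerivAt (fun w => M 0 0 * w + M 0 1) (M 0 0) x :=
    (((hasDerivAt_id x).const_mul (M 0 0)).add_const (M 0 1)).congr_deriv (mul_one _)
  refine (hnum.div (hasDerivAt_mobiusDenom M x) hx).congr_deriv ?_
  rw [Matrix.det_fin_two, mobiusDenom]
  ring

theorem deriv_deriv_mobiusMap (hx : mobiusDenom M x ≠ 0) :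
    deriv (deriv (mobiusMap M)) x = -2 * M 1 0 * M.det / mobiusDenom M x ^ 3 := by
  have hderiv : deriv (mobiusMap M) =ᶠ[𝓝 x] fun w => M.det / mobiusDenom M w ^ 2 :=
    ((hasDerivAt_mobiusDenom M x).continuousAt.eventually_ne hx).mono fun w hw =>
      (hasDerivAt_mobiusMap hw).deriv
  have hquot := (hasDerivAt_const x M.det).div ((hasDerivAt_mobiusDenom M x).pow 2)
    (pow_ne_zero 2 hx)
  rw [hderiv.deriv_eq]
  refine hquot.deriv.trans ?_
  simp only [Pi.pow_apply]
  field_simp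
  ring

namespace Osculates

variable {f : 𝕜 → 𝕜} {z : 𝕜} (h : Osculates M f z)
include h

theorem numerator_eq : M 0 0 * z + M 0 1 = f z * mobiusDenom M z := by
  rw [← h.2.1, mobiusMap, div_mul_cancel₀ _ h.1]

variable (hdet : M.det = 1)
include hdet

theorem mobiusDenom_sq_mul_deriv_eq_one : mobiusDenom M z ^ 2 * deriv f z = 1 := by
  rw [← h.2.2.1, (hasDerivAt_mobiusMap h.1).deriv, hdet]
  field_simp [h.1]

theorem two_mul_mul_deriv_add_eq_zero :
    2 * M 1 0 * deriv f z + deriv (deriv f) z * mobiusDenom M z = 0 := by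
  rw [← h.2.2.2, deriv_deriv_mobiusMap h.1, ← h.2.2.1, (hasDerivAt_mobiusMap h.1).deriv, hdet]
  field_simp [h.1]
  ring

theorem apply_zero_zero_eq : M 0 0 = deriv f z * mobiusDenom M z + M 1 0 * f z := by
  have hnum := h.numerator_eq
  have hsq := h.mobiusDenom_sq_mul_deriv_eq_one hdet
  rw [Matrix.det_fin_two] at hdet
  refine mul_left_cancel₀ h.1 ?_
  unfold mobiusDenom at *
  linear_combination hdet + M 1 0 * hnum - hsq

end Osculates

end Mobius

theorem schwarzian_eq {f : ℂ → ℂ} {z : ℂ} (hf₁ : DifferentiableAt ℂ (deriv f) z)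
    (hf₂ : DifferentiableAt ℂ (deriv (deriv f)) z) (hf' : deriv f z ≠ 0) :
    schwarzian f z = deriv (deriv (deriv f)) z / deriv f z -
      3 / 2 * (deriv (deriv f) z / deriv f z) ^ 2 := by
  have hquot : HasDerivAt (fun w => deriv (deriv f) w / deriv f w) _ z :=
    hf₂.hasDerivAt.div hf₁.hasDerivAt hf'
  rw [schwarzian, hquot.deriv]
  field_simp
  ring

section OsculatingFamily

variable {G : ℂ → Matrix (Fin 2) (Fin 2) ℂ} {f : ℂ → ℂ} {z : ℂ}
  (hf : AnalyticAt ℂ f z) (hG : ∀ i j, DifferentiableAt ℂ (fun w => G w i j) z)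
  (hosc : ∀ᶠ w in 𝓝 z, Osculates (G w) f w) (hdet : ∀ᶠ w in 𝓝 z, (G w).det = 1)
include hf hG hosc hdet

theorem hasDerivAt_mobiusDenom_of_osculates :
    HasDerivAt (fun w => mobiusDenom (G w) w) (G z 1 0) z := by
  have hpd : DifferentiableAt ℂ (fun w => mobiusDenom (G w) w) z :=
    ((hG 1 0).mul differentiableAt_id).add (hG 1 1)
  have hp := hpd.hasDerivAt
  have hf₁ : HasDerivAt (deriv f) (deriv (deriv f) z) z := hf.deriv.differentiableAt.hasDerivAt
  have hsq := ((hp.pow 2).mul hf₁).eq_zero_of_eventually_eq_const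
    ((hosc.and hdet).mono fun w h => h.1.mobiusDenom_sq_mul_deriv_eq_one h.2)
  obtain ⟨hoscz, hdetz⟩ := (hosc.and hdet).self_of_nhds
  have h1 := hoscz.mobiusDenom_sq_mul_deriv_eq_one hdetz
  have h2 := hoscz.two_mul_mul_deriv_add_eq_zero hdetz
  have hne : mobiusDenom (G z) z * deriv f z ≠ 0 :=
    right_ne_zero_of_mul_eq_one (a := mobiusDenom (G z) z) (by linear_combination h1)
  have hprod : mobiusDenom (G z) z * deriv f z *
      (deriv (fun w => mobiusDenom (G w) w) z - G z 1 0) = 0 := by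
    simp only [Nat.cast_ofNat, Nat.add_one_sub_one, pow_one, Pi.pow_apply] at hsq
    linear_combination hsq / 2 - mobiusDenom (G z) z * h2 / 2
  exact hp.congr_deriv (sub_eq_zero.1 ((mul_eq_zero.1 hprod).resolve_left hne))

theorem hasDerivAt_apply_one_zero_of_osculates :
    HasDerivAt (fun w => G w 1 0) (-(1 / 2) * schwarzian f z * mobiusDenom (G z) z) z := by
  have hc := (hG 1 0).hasDerivAt
  have hf₁ : HasDerivAt (deriv f) (deriv (deriv f) z) z := hf.deriv.differentiableAt.hasDerivAt
  have hf₂ : HasDerivAt (deriv (deriv f)) (deriv (deriv (deriv f)) z) z :=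
    hf.deriv.deriv.differentiableAt.hasDerivAt
  have hp := hasDerivAt_mobiusDenom_of_osculates hf hG hosc hdet
  have hrel := (((hc.const_mul 2).mul hf₁).add (hf₂.mul hp)).eq_zero_of_eventually_eq_const
    ((hosc.and hdet).mono fun w h => h.1.two_mul_mul_deriv_add_eq_zero h.2)
  obtain ⟨hoscz, hdetz⟩ := (hosc.and hdet).self_of_nhds
  have h1 := hoscz.mobiusDenom_sq_mul_deriv_eq_one hdetz
  have h2 := hoscz.two_mul_mul_deriv_add_eq_zero hdetz
  have hf' : deriv f z ≠ 0 := right_ne_zero_of_mul_eq_one h1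
  refine hc.congr_deriv ?_
  rw [schwarzian_eq hf₁.differentiableAt hf₂.differentiableAt hf']
  field_simp
  linear_combination 2 * deriv f z * hrel - 3 * deriv (deriv f) z * h2

theorem hasDerivAt_apply_zero_zero_of_osculates :
    HasDerivAt (fun w => G w 0 0) (deriv (fun w => G w 1 0) z * f z) z := by
  have hentry : (fun w => G w 0 0) =ᶠ[𝓝 z]
      fun w => deriv f w * mobiusDenom (G w) w + G w 1 0 * f w :=
    (hosc.and hdet).mono fun w h => h.1.apply_zero_zero_eq h.2
  obtain ⟨hoscz, hdetz⟩ := (hosc.and hdet).self_of_nhds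
  refine ((hf.deriv.differentiableAt.hasDerivAt.mul
    (hasDerivAt_mobiusDenom_of_osculates hf hG hosc hdet)).add
    ((hG 1 0).hasDerivAt.mul hf.differentiableAt.hasDerivAt)).congr_of_eventuallyEq hentry
    |>.congr_deriv ?_
  linear_combination hoscz.two_mul_mul_deriv_add_eq_zero hdetz

theorem hasDerivAt_apply_zero_one_of_osculates :
    HasDerivAt (fun w => G w 0 1) (-(deriv (fun w => G w 1 0) z * f z * z)) z := by
  have hentry : (fun w => G w 0 1) =ᶠ[𝓝 z]
      fun w => f w * mobiusDenom (G w) w - G w 0 0 * w :=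
    hosc.mono fun w h => eq_sub_of_add_eq' h.numerator_eq
  obtain ⟨hoscz, hdetz⟩ := (hosc.and hdet).self_of_nhds
  refine ((hf.differentiableAt.hasDerivAt.mul
    (hasDerivAt_mobiusDenom_of_osculates hf hG hosc hdet)).sub
    ((hasDerivAt_apply_zero_zero_of_osculates hf hG hosc hdet).mul (hasDerivAt_id z)))
    |>.congr_of_eventuallyEq hentry |>.congr_deriv ?_
  simp only [id_eq, mul_one]
  linear_combination -hoscz.apply_zero_zero_eq hdetz

theorem hasDerivAt_apply_one_one_of_osculates :
    HasDerivAt (fun w => G w 1 1) (-(deriv (fun w => G w 1 0) z * z)) z := by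
  have hentry : (fun w => G w 1 1) =ᶠ[𝓝 z] fun w => mobiusDenom (G w) w - G w 1 0 * w :=
    Eventually.of_forall fun w => (add_sub_cancel_left _ _).symm
  refine ((hasDerivAt_mobiusDenom_of_osculates hf hG hosc hdet).sub
    ((hG 1 0).hasDerivAt.mul (hasDerivAt_id z)))
    |>.congr_of_eventuallyEq hentry |>.congr_deriv ?_
  simp only [id_eq, mul_one]
  ring

theorem deriv_matrix_of_osculates :
    Matrix.of (fun i j => deriv (fun w => G w i j) z) =
      deriv (fun w => G w 1 0) z • !![f z, -(f z * z); 1, -z] := by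
  ext i j
  fin_cases i <;> fin_cases j <;>
    simp [(hasDerivAt_apply_zero_zero_of_osculates hf hG hosc hdet).deriv,
      (hasDerivAt_apply_zero_one_of_osculates hf hG hosc hdet).deriv,
      (hasDerivAt_apply_one_one_of_osculates hf hG hosc hdet).deriv, mul_assoc]

end OsculatingFamily

theorem darboux_deriv_osculation_general (Ω : Set ℂ) (hΩ : IsOpen Ω) (f : ℂ → ℂ)
    (hf : DifferentiableOn ℂ f Ω)
    (G : ℂ → Matrix (Fin 2) (Fin 2) ℂ)
    (hG : ∀ i j, DifferentiableOn ℂ (fun z => G z i j) Ω)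
    (hdet : ∀ z ∈ Ω, (G z).det = 1)
    (hosc : ∀ z ∈ Ω,
      G z 1 0 * z + G z 1 1 ≠ 0 ∧
      (G z 0 0 * z + G z 0 1) / (G z 1 0 * z + G z 1 1) = f z ∧
      deriv (fun w => (G z 0 0 * w + G z 0 1) / (G z 1 0 * w + G z 1 1)) z = deriv f z ∧
      deriv (deriv (fun w => (G z 0 0 * w + G z 0 1) / (G z 1 0 * w + G z 1 1))) z =
        deriv (deriv f) z) :
    ∀ z ∈ Ω,
      (G z)⁻¹ * (Matrix.of fun i j => deriv (fun w => G w i j) z) =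
        (-(1 / 2) * schwarzian f z) • !![z, -z ^ 2; 1, -z] := by
  intro z hz
  have hΩz : ∀ᶠ w in 𝓝 z, w ∈ Ω := hΩ.mem_nhds hz
  have hoscz : Osculates (G z) f z := hosc z hz
  have hfz : AnalyticAt ℂ f z := hf.analyticOnNhd hΩ z hz
  have hGz : ∀ i j, DifferentiableAt ℂ (fun w => G w i j) z :=
    fun i j => (hG i j).differentiableAt hΩz
  have hoscΩ : ∀ᶠ w in 𝓝 z, Osculates (G w) f w := hΩz.mono hosc
  have hdetΩ : ∀ᶠ w in 𝓝 z, (G w).det = 1 := hΩz.mono hdet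
  rw [deriv_matrix_of_osculates hfz hGz hoscΩ hdetΩ, Matrix.mul_smul,
    inv_mul_eq_inv_mobiusDenom_smul (hdet z hz) hoscz.numerator_eq,
    (hasDerivAt_apply_one_zero_of_osculates hfz hGz hoscΩ hdetΩ).deriv, smul_smul]
  congr 1
  field_simp [hoscz.1]

/-- The Darboux derivative `G⁻¹ · G'` of the osculation map `G` of a locally
injective holomorphic function `f` is determined by the Schwarzian derivative:
`G(z)⁻¹ G'(z) = -(1/2) S(f)(z) · [[z, -z²],[1, -z]]`. -/
theorem darboux_deriv_osculation (Ω : Set ℂ) (hΩ : IsOpen Ω) (f : ℂ → ℂ)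
    (hf : DifferentiableOn ℂ f Ω) (hf' : ∀ z ∈ Ω, deriv f z ≠ 0)
    (G : ℂ → Matrix (Fin 2) (Fin 2) ℂ)
    (hG : ∀ i j, DifferentiableOn ℂ (fun z => G z i j) Ω)
    (hdet : ∀ z ∈ Ω, (G z).det = 1)
    (hosc : ∀ z ∈ Ω,
      G z 1 0 * z + G z 1 1 ≠ 0 ∧
      (G z 0 0 * z + G z 0 1) / (G z 1 0 * z + G z 1 1) = f z ∧
      deriv (fun w => (G z 0 0 * w + G z 0 1) / (G z 1 0 * w + G z 1 1)) z = deriv f z ∧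
      deriv (deriv (fun w => (G z 0 0 * w + G z 0 1) / (G z 1 0 * w + G z 1 1))) z =
        deriv (deriv f) z) :
    ∀ z ∈ Ω,
      (G z)⁻¹ * (Matrix.of fun i j => deriv (fun w => G w i j) z) =
        (-(1 / 2) * schwarzian f z) • !![z, -z ^ 2; 1, -z] :=
  darboux_deriv_osculation_general Ω hΩ f hf G hG hdet hosc
end

section
/- Let Ω ⊆ ℂ be a nonempty connected open set, let φ : Ω → ℂ be holomorphic, and let u₁, u₂ : Ω → ℂ be holomorphic solutions of the Schwarzian equation u'' + (1/2)φu = 0 whose Wronskian W = u₁'u₂ − u₁u₂' is a nonzero constant. Then on the open set Ω₀ = {z ∈ Ω : u₂(z) ≠ 0}, the quotient f = u₁/u₂ is holomorphic, its derivative satisfies f'(z) = W/u₂(z)² (in particular f' is nowhere vanishing on Ω₀), and its Schwarzian derivative satisfies S(f)(z) = φ(z) for all z ∈ Ω₀. -/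
/-!
If `f' = W / u²` with `W ≠ 0`, then `f''/f' = -2 u'/u`, so
`S(f) = (-2 u'/u)' - 2 (u'/u)² = -2 u''/u`. For `f = u₁/u₂` the constant Wronskian gives
`f' = W / u₂²`, and the equation `u₂'' = -(1/2) φ u₂` turns `-2 u₂''/u₂` into `φ`.
-/

open Filter Topology

theorem schwarzian_eq_deriv_sub_sq_of_eventuallyEq {f g : ℂ → ℂ} {z : ℂ}
    (h : (fun w => deriv (deriv f) w / deriv f w) =ᶠ[𝓝 z] g) :
    schwarzian f z = deriv g z - 1 / 2 * g z ^ 2 := by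
  unfold schwarzian
  rw [h.deriv_eq, h.eq_of_nhds]

theorem deriv_deriv_div_deriv_eventuallyEq {f u : ℂ → ℂ} {z W : ℂ}
    (hf : deriv f =ᶠ[𝓝 z] fun w => W / u w ^ 2) (hW : W ≠ 0)
    (hu : ∀ᶠ w in 𝓝 z, DifferentiableAt ℂ u w) (hz : u z ≠ 0) :
    (fun w => deriv (deriv f) w / deriv f w) =ᶠ[𝓝 z] fun w => -2 * deriv u w / u w := by
  have hne : ∀ᶠ w in 𝓝 z, u w ≠ 0 :=
    hu.self_of_nhds.continuousAt.eventually_ne hz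
  filter_upwards [hf.eventually_nhds, hf, hu, hne] with w hfw hfw' huw hw
  have hsq : HasDerivAt (fun v => u v ^ 2) (2 * u w * deriv u w) w := by
    simpa [mul_comm, mul_assoc, mul_left_comm] using huw.hasDerivAt.fun_pow 2
  have hf' : deriv (deriv f) w = (0 * u w ^ 2 - W * (2 * u w * deriv u w)) / (u w ^ 2) ^ 2 := by
    rw [EventuallyEq.deriv_eq hfw]
    exact ((hasDerivAt_const w W).div hsq (pow_ne_zero 2 hw)).deriv
  rw [hf', hfw']
  field_simp
  ring

theorem schwarzian_eq_of_deriv_eq_div_sq {f u : ℂ → ℂ} {z W : ℂ}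
    (hf : deriv f =ᶠ[𝓝 z] fun w => W / u w ^ 2) (hW : W ≠ 0)
    (hu : ∀ᶠ w in 𝓝 z, DifferentiableAt ℂ u w) (hu' : DifferentiableAt ℂ (deriv u) z)
    (hz : u z ≠ 0) :
    schwarzian f z = -2 * deriv (deriv u) z / u z := by
  rw [schwarzian_eq_deriv_sub_sq_of_eventuallyEq
    (deriv_deriv_div_deriv_eventuallyEq hf hW hu hz),
    ((hu'.hasDerivAt.const_mul (-2)).fun_div hu.self_of_nhds.hasDerivAt hz).deriv]
  field_simp
  ring

theorem schwarzian_of_ode_quotient_general (Ω : Set ℂ) (hΩ : IsOpen Ω)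
    (φ u₁ u₂ : ℂ → ℂ)
    (hu₁ : DifferentiableOn ℂ u₁ Ω) (hu₂ : DifferentiableOn ℂ u₂ Ω)
    (hode₂ : ∀ z ∈ Ω, deriv (deriv u₂) z + (1 / 2) * φ z * u₂ z = 0)
    (W : ℂ) (hW : W ≠ 0)
    (hWr : ∀ z ∈ Ω, deriv u₁ z * u₂ z - u₁ z * deriv u₂ z = W) :
    DifferentiableOn ℂ (fun z => u₁ z / u₂ z) {z ∈ Ω | u₂ z ≠ 0} ∧
    ∀ z ∈ {z ∈ Ω | u₂ z ≠ 0},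
      deriv (fun w => u₁ w / u₂ w) z = W / u₂ z ^ 2 ∧
      deriv (fun w => u₁ w / u₂ w) z ≠ 0 ∧
      schwarzian (fun w => u₁ w / u₂ w) z = φ z := by
  set Ω₀ := {z ∈ Ω | u₂ z ≠ 0}
  have hΩ₀ : IsOpen Ω₀ := hu₂.continuousOn.isOpen_inter_preimage hΩ isOpen_compl_singleton
  have hdiff₁ {z} (hz : z ∈ Ω) : DifferentiableAt ℂ u₁ z := hu₁.differentiableAt (hΩ.mem_nhds hz)
  have hdiff₂ {z} (hz : z ∈ Ω) : DifferentiableAt ℂ u₂ z := hu₂.differentiableAt (hΩ.mem_nhds hz)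
  have hderiv : ∀ z ∈ Ω₀, deriv (fun w => u₁ w / u₂ w) z = W / u₂ z ^ 2 := fun z hz => by
    rw [deriv_fun_div (hdiff₁ hz.1) (hdiff₂ hz.1) hz.2, hWr z hz.1]
  refine ⟨fun z hz => ((hdiff₁ hz.1).div (hdiff₂ hz.1) hz.2).differentiableWithinAt,
    fun z hz => ⟨hderiv z hz, hderiv z hz ▸ div_ne_zero hW (pow_ne_zero 2 hz.2), ?_⟩⟩
  rw [schwarzian_eq_of_deriv_eq_div_sq (eventually_of_mem (hΩ₀.mem_nhds hz) hderiv) hW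
    (eventually_of_mem (hΩ.mem_nhds hz.1) fun _ => hdiff₂)
    ((hu₂.analyticOnNhd hΩ).deriv z hz.1).differentiableAt hz.2]
  field_simp [hz.2]
  linear_combination -2 * hode₂ z hz.1

/-- If `u₁, u₂` are holomorphic solutions of `u'' + (1/2) φ u = 0` with
nonzero constant Wronskian `W`, then on `Ω₀ = {z ∈ Ω : u₂ z ≠ 0}` the
quotient `f = u₁ / u₂` is holomorphic with `f' = W / u₂²` (in particular
`f'` is nowhere vanishing) and `S(f) = φ`. -/
theorem schwarzian_of_ode_quotient (Ω : Set ℂ) (hΩ : IsOpen Ω) (hconn : IsConnected Ω)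
    (φ u₁ u₂ : ℂ → ℂ) (hφ : DifferentiableOn ℂ φ Ω)
    (hu₁ : DifferentiableOn ℂ u₁ Ω) (hu₂ : DifferentiableOn ℂ u₂ Ω)
    (hode₁ : ∀ z ∈ Ω, deriv (deriv u₁) z + (1 / 2) * φ z * u₁ z = 0)
    (hode₂ : ∀ z ∈ Ω, deriv (deriv u₂) z + (1 / 2) * φ z * u₂ z = 0)
    (W : ℂ) (hW : W ≠ 0)
    (hWr : ∀ z ∈ Ω, deriv u₁ z * u₂ z - u₁ z * deriv u₂ z = W) :
    DifferentiableOn ℂ (fun z => u₁ z / u₂ z) {z ∈ Ω | u₂ z ≠ 0} ∧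
    ∀ z ∈ {z ∈ Ω | u₂ z ≠ 0},
      deriv (fun w => u₁ w / u₂ w) z = W / u₂ z ^ 2 ∧
      deriv (fun w => u₁ w / u₂ w) z ≠ 0 ∧
      schwarzian (fun w => u₁ w / u₂ w) z = φ z :=
  schwarzian_of_ode_quotient_general Ω hΩ φ u₁ u₂ hu₁ hu₂ hode₂ W hW hWr
end

section
/- Let G be a group and let ρ₁, ρ₂ : G → SL(2,ℂ) be group homomorphisms into the group of 2×2 complex matrices of determinant 1. Assume ρ₁ is irreducible, i.e. there is no nonzero vector v ∈ ℂ² such that for every g ∈ G the vector ρ₁(g)·v is a scalar multiple of v. If the characters agree, i.e. tr(ρ₁(g)) = tr(ρ₂(g)) for all g ∈ G, then ρ₁ and ρ₂ are conjugate: there exists A ∈ SL(2,ℂ) such that ρ₂(g) = A·ρ₁(g)·A⁻¹ for all g ∈ G. -/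
/-!
If every `ρ₁ g` has trace `±2`, then `ρ₁` is reducible: Cayley–Hamilton forces
`tr (ρ g ρ h) = tr ρ g · tr ρ h / 2`, so for a non-scalar `ρ g₁` with double eigenvalue `λ` the
nilpotent `N = ρ g₁ - λ` satisfies `tr (N ρ h) = 0`, hence `N ρ h N = 0`, and every `ρ h` preserves
the line `im N = ker N`.

Otherwise some `ρ₁ g₀`, and with it `ρ₂ g₀`, has distinct eigenvalues `λ, λ⁻¹`; conjugate both
representations so that `g₀ ↦ diag (λ, λ⁻¹)`. The traces of `h` and `g₀ h` then determine the
diagonal entries of `ρ h`, and the traces of products determine the products `b(h) c(k)` of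
off-diagonal entries. Irreducibility makes some `b(p)` and some `c(q)` nonzero, so the off-diagonal
entries of the two representations differ by `b ↦ s b`, `c ↦ s⁻¹ c`, which is conjugation by
`diag (s, 1)`. Finally the conjugating matrix is rescaled into `SL(2,ℂ)`.
-/

open Matrix
open scoped MatrixGroups

def HasCommonEigenvector {ι n K : Type*} [Fintype n] [Semiring K] (M : ι → Matrix n n K) :
    Prop :=
  ∃ v : n → K, v ≠ 0 ∧ ∀ i, ∃ c : K, M i *ᵥ v = c • v

section

variable {K : Type*} [Field K]

theorem mul_mul_eq_trace_smul_sub_det_smul_adjugate (X Y : Matrix (Fin 2) (Fin 2) K) :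
    X * Y * X = trace (X * Y) • X - X.det • adjugate Y := by
  rw [eta_fin_two X, eta_fin_two Y]
  ext i j
  fin_cases i <;> fin_cases j <;>
    simp [trace_fin_two, det_fin_two, adjugate_fin_two, mul_apply, Fin.sum_univ_two] <;> ring

theorem det_sub_smul_one_fin_two (M : Matrix (Fin 2) (Fin 2) K) (c : K) :
    (M - c • 1).det = c ^ 2 - M.trace * c + M.det := by
  simp only [det_fin_two, trace_fin_two, Matrix.sub_apply, Matrix.smul_apply, smul_eq_mul,
    one_apply_eq, one_apply_ne, ne_eq, zero_ne_one, one_ne_zero, not_false_eq_true]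
  ring

theorem exists_smul_eq_of_det_eq_zero {u w : Fin 2 → K} (hu : u ≠ 0)
    (hdet : (of ![u, w]).det = 0) : ∃ c : K, c • u = w := by
  by_contra! h
  have hind : LinearIndependent K ![u, w] := (LinearIndependent.pair_iff' hu).mpr h
  have : IsUnit (of ![u, w]) := linearIndependent_rows_iff_isUnit.mp hind
  rw [isUnit_iff_isUnit_det, hdet] at this
  exact not_isUnit_zero this

theorem exists_smul_eq_of_mulVec_eq_zero {N : Matrix (Fin 2) (Fin 2) K} (hN : N ≠ 0)
    {u w : Fin 2 → K} (hu : u ≠ 0) (hNu : N *ᵥ u = 0) (hNw : N *ᵥ w = 0) :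
    ∃ c : K, c • u = w := by
  by_contra! h
  have hind : LinearIndependent K ![u, w] := (LinearIndependent.pair_iff' hu).mpr h
  have hunit : IsUnit (of ![u, w])ᵀ :=
    (isUnit_transpose _).mpr (linearIndependent_rows_iff_isUnit.mp hind)
  apply hN
  have : N * (of ![u, w])ᵀ = 0 := by
    ext i j
    fin_cases j
    · simpa [mul_apply, mulVec, dotProduct] using congrFun hNu i
    · simpa [mul_apply, mulVec, dotProduct] using congrFun hNw i
  exact hunit.mul_left_inj.mp (by rw [this, zero_mul])

theorem hasCommonEigenvector_of_forall_apply_eq_zero {ι n : Type*} [Fintype n] [DecidableEq n]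
    (M : ι → Matrix n n K) (k : n) (h : ∀ i j, j ≠ k → M i j k = 0) :
    HasCommonEigenvector M := by
  refine ⟨Pi.single k 1, by simp, fun i => ⟨M i k k, ?_⟩⟩
  ext j
  by_cases hj : j = k
  · subst hj; simp
  · simp [hj, h i j hj]

theorem HasCommonEigenvector.of_conj {ι n : Type*} [Fintype n] [DecidableEq n]
    (P : GL n K) {M : ι → Matrix n n K}
    (h : HasCommonEigenvector fun i => (P : Matrix n n K) * M i * ((P⁻¹ : GL n K) : Matrix n n K)) :
    HasCommonEigenvector M := by
  obtain ⟨v, hv, hM⟩ := h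
  refine ⟨((P⁻¹ : GL n K) : Matrix n n K) *ᵥ v, fun h0 => hv ?_, fun i => ?_⟩
  · simpa [mulVec_mulVec] using congrArg ((P : Matrix n n K) *ᵥ ·) h0
  · obtain ⟨c, hc⟩ := hM i
    refine ⟨c, ?_⟩
    have : M i * (P⁻¹ : GL n K) = (P⁻¹ : GL n K) * (P * M i * (P⁻¹ : GL n K)) := by
      simp [← mul_assoc]
    rw [mulVec_mulVec, this, ← mulVec_mulVec, hc, mulVec_smul]

theorem hasCommonEigenvector_of_trace_mul_eq_zero {ι : Type*} {N : Matrix (Fin 2) (Fin 2) K}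
    (hN : N ≠ 0) (htr : N.trace = 0) (hdet : N.det = 0) (B : ι → Matrix (Fin 2) (Fin 2) K)
    (hB : ∀ i, trace (N * B i) = 0) : HasCommonEigenvector B := by
  obtain ⟨w, hw⟩ : ∃ w : Fin 2 → K, N *ᵥ w ≠ 0 := by
    by_contra! h
    exact hN ((ext_iff_mulVec (A := N) (B := 0)).mpr fun w => by simp [h w])
  have hNN : N * N = 0 := by
    simpa [htr, hdet] using mul_mul_eq_trace_smul_sub_det_smul_adjugate N 1
  refine ⟨N *ᵥ w, hw, fun i => ?_⟩
  -- `B i` maps `N *ᵥ w` into `ker N`, which is the line spanned by `N *ᵥ w`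
  have hNBN : N * B i * N = 0 := by
    simpa [hB i, hdet] using mul_mul_eq_trace_smul_sub_det_smul_adjugate N (B i)
  obtain ⟨c, hc⟩ := exists_smul_eq_of_mulVec_eq_zero hN hw (w := B i *ᵥ (N *ᵥ w))
    (by rw [mulVec_mulVec, hNN, zero_mulVec])
    (by rw [mulVec_mulVec, mulVec_mulVec, hNBN, zero_mulVec])
  exact ⟨c, hc.symm⟩

theorem trace_mul_of_trace_sq_eq_four [NeZero (2 : K)] {G : Type*} [Monoid G]
    (ρ : G →* SL(2, K)) (hρ : ∀ g, trace (ρ g : Matrix (Fin 2) (Fin 2) K) ^ 2 = 4) (g h : G) :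
    trace ((ρ g : Matrix (Fin 2) (Fin 2) K) * (ρ h : Matrix (Fin 2) (Fin 2) K)) =
      trace (ρ g : Matrix (Fin 2) (Fin 2) K) * trace (ρ h : Matrix (Fin 2) (Fin 2) K) / 2 := by
  set A : Matrix (Fin 2) (Fin 2) K := (ρ g : Matrix (Fin 2) (Fin 2) K)
  set B : Matrix (Fin 2) (Fin 2) K := (ρ h : Matrix (Fin 2) (Fin 2) K)
  have hAB : (ρ (g * h) : Matrix (Fin 2) (Fin 2) K) = A * B := by simp [A, B]
  have hAAB : (ρ (g * g * h) : Matrix (Fin 2) (Fin 2) K) = A * A * B := by simp [A, B]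
  have hdetA : A.det = 1 := (ρ g).2
  have hCH : trace (A * A * B) = trace A * trace (A * B) - trace B := by
    have h := mul_mul_eq_trace_smul_sub_det_smul_adjugate A 1
    rw [mul_one] at h
    simp [h, hdetA, sub_mul, trace_sub]
  have hA : trace A ^ 2 = 4 := hρ g
  have hB : trace B ^ 2 = 4 := hρ h
  have hs := hρ (g * h)
  have hs' := hρ (g * g * h)
  rw [hAB] at hs
  rw [hAAB, hCH] at hs'
  -- `(tr A · s - tr B)² = 4` with `tr A² = tr B² = s² = 4` forces `tr A · tr B · s = 8`
  rw [eq_div_iff two_ne_zero]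
  apply mul_left_cancel₀ (pow_ne_zero 3 (two_ne_zero (α := K)))
  linear_combination trace (A * B) * (hs' - trace (A * B) ^ 2 * hA - 4 * hs - hB)
    + 2 * trace A * trace B * hs

theorem hasCommonEigenvector_of_trace_sq_eq_four [NeZero (2 : K)] {G : Type*} [Monoid G]
    (ρ : G →* SL(2, K)) (hρ : ∀ g, trace (ρ g : Matrix (Fin 2) (Fin 2) K) ^ 2 = 4) :
    HasCommonEigenvector fun g => (ρ g : Matrix (Fin 2) (Fin 2) K) := by
  by_cases hscalar : ∀ g, (ρ g : Matrix (Fin 2) (Fin 2) K) =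
      (trace (ρ g : Matrix (Fin 2) (Fin 2) K) / 2) • 1
  · refine ⟨Pi.single 0 1, by simp, fun g => ⟨trace (ρ g : Matrix (Fin 2) (Fin 2) K) / 2, ?_⟩⟩
    exact (congrArg (· *ᵥ Pi.single 0 1) (hscalar g)).trans (by rw [smul_mulVec, one_mulVec])
  obtain ⟨g₁, hg₁⟩ := not_forall.mp hscalar
  set a := trace (ρ g₁ : Matrix (Fin 2) (Fin 2) K)
  refine hasCommonEigenvector_of_trace_mul_eq_zero
    (N := (ρ g₁ : Matrix (Fin 2) (Fin 2) K) - (a / 2) • 1) (sub_ne_zero.mpr hg₁) ?_ ?_ _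
    fun g => ?_
  · simp [a, trace_sub, div_mul_cancel₀ _ (two_ne_zero (α := K))]
  · rw [det_sub_smul_one_fin_two, (ρ g₁).2]
    field_simp
    linear_combination -hρ g₁
  · have h := trace_mul_of_trace_sq_eq_four ρ hρ g₁ g
    rw [sub_mul, trace_sub, smul_mul, one_mul, trace_smul, smul_eq_mul, h]
    ring

open Polynomial in
theorem exists_ne_add_eq_mul_eq_one [IsAlgClosed K] {τ : K} (hτ : τ ^ 2 ≠ 4) :
    ∃ l e : K, l ≠ e ∧ τ = l + e ∧ l * e = 1 := by
  obtain ⟨l, hl⟩ := IsAlgClosed.exists_root (X ^ 2 - C τ * X + 1 : K[X]) (by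
    rw [show (X ^ 2 - C τ * X + 1 : K[X]).degree = 2 by compute_degree!]; decide)
  simp only [IsRoot, eval_add, eval_sub, eval_pow, eval_mul, eval_X, eval_C, eval_one] at hl
  refine ⟨l, τ - l, fun h => hτ ?_, by ring, by linear_combination -hl⟩
  linear_combination -4 * hl + (2 * l - τ) * h

theorem exists_conj_eq_diagonal (M : Matrix (Fin 2) (Fin 2) K) {l e : K} (hle : l ≠ e)
    (htr : M.trace = l + e) (hdet : M.det = l * e) :
    ∃ P : GL (Fin 2) K,
      (P : Matrix (Fin 2) (Fin 2) K) * M * ((P⁻¹ : GL (Fin 2) K) : Matrix _ _ K) =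
        diagonal ![l, e] := by
  have heigen : ∀ μ, μ = l ∨ μ = e → ∃ u : Fin 2 → K, u ≠ 0 ∧ M *ᵥ u = μ • u := by
    intro μ hμ
    have : (M - μ • 1).det = 0 := by
      rw [det_sub_smul_one_fin_two, htr, hdet]
      rcases hμ with rfl | rfl <;> ring
    obtain ⟨u, hu, h⟩ := exists_mulVec_eq_zero_iff.mpr this
    exact ⟨u, hu, by rwa [sub_mulVec, smul_mulVec, one_mulVec, sub_eq_zero] at h⟩
  obtain ⟨u, hu, hMu⟩ := heigen l (.inl rfl)
  obtain ⟨w, hw, hMw⟩ := heigen e (.inr rfl)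
  set Q : Matrix (Fin 2) (Fin 2) K := (of ![u, w])ᵀ
  have hQ : Q.det ≠ 0 := by
    rw [det_transpose]
    intro h0
    obtain ⟨c, rfl⟩ := exists_smul_eq_of_det_eq_zero hu h0
    have : (l - e) • c • u = 0 := by
      rw [mulVec_smul, hMu, smul_comm] at hMw
      rw [sub_smul, hMw, sub_self]
    exact hw ((smul_eq_zero.mp this).resolve_left (sub_ne_zero.mpr hle))
  have hMQ : M * Q = Q * diagonal ![l, e] := by
    ext i j
    fin_cases j
    · simpa [Q, mul_apply, mulVec, dotProduct, mul_comm] using congrFun hMu i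
    · simpa [Q, mul_apply, mulVec, dotProduct, mul_comm] using congrFun hMw i
  refine ⟨(GeneralLinearGroup.mkOfDetNeZero Q hQ)⁻¹, ?_⟩
  simp only [inv_inv, GeneralLinearGroup.coe_inv]
  change Q⁻¹ * M * Q = _
  rw [mul_assoc, hMQ]
  exact nonsing_inv_mul_cancel_left _ _ (isUnit_iff_ne_zero.mpr hQ)

theorem exists_forall_eq_mul_of_mul_eq_mul {ι : Type*} {b₁ c₁ b₂ c₂ : ι → K}
    (h : ∀ i j, b₁ i * c₁ j = b₂ i * c₂ j) {p q : ι} (hp : b₁ p ≠ 0) (hq : c₁ q ≠ 0) :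
    ∃ s ≠ 0, ∀ i, b₂ i = s * b₁ i ∧ c₂ i = s⁻¹ * c₁ i := by
  have hpq : b₂ p * c₂ q ≠ 0 := h p q ▸ mul_ne_zero hp hq
  have hb₂ : b₂ p ≠ 0 := left_ne_zero_of_mul hpq
  have hc₂ : c₂ q ≠ 0 := right_ne_zero_of_mul hpq
  refine ⟨c₁ q / c₂ q, div_ne_zero hq hc₂, fun i => ⟨?_, ?_⟩⟩
  · field_simp
    linear_combination -h i q
  · rw [inv_div]
    field_simp
    apply mul_left_cancel₀ (mul_ne_zero hp hb₂)
    linear_combination (b₁ p * c₁ i) * h p q - (b₁ p * c₁ q) * h p i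

section Diagonal

variable {G : Type*} [Monoid G] (σ₁ σ₂ : G →* Matrix (Fin 2) (Fin 2) K) {g₀ : G} {l e : K}

theorem diag_apply_eq_of_trace_eq (hle : l ≠ e) (h₁ : σ₁ g₀ = diagonal ![l, e])
    (h₂ : σ₂ g₀ = diagonal ![l, e]) (htr : ∀ g, trace (σ₁ g) = trace (σ₂ g)) (g : G) :
    σ₁ g 0 0 = σ₂ g 0 0 ∧ σ₁ g 1 1 = σ₂ g 1 1 := by
  have h := htr g
  have h' := htr (g₀ * g)
  rw [trace_fin_two, trace_fin_two] at h
  simp only [map_mul, h₁, h₂, trace_fin_two, diagonal_mul, cons_val_zero, cons_val_one] at h'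
  constructor <;> apply mul_left_cancel₀ (sub_ne_zero.mpr hle)
  · linear_combination h' - e * h
  · linear_combination l * h - h'

theorem off_diag_mul_eq_of_trace_eq (hle : l ≠ e) (h₁ : σ₁ g₀ = diagonal ![l, e])
    (h₂ : σ₂ g₀ = diagonal ![l, e]) (htr : ∀ g, trace (σ₁ g) = trace (σ₂ g)) (g h : G) :
    σ₁ g 0 1 * σ₁ h 1 0 = σ₂ g 0 1 * σ₂ h 1 0 := by
  have hdiag := diag_apply_eq_of_trace_eq σ₁ σ₂ hle h₁ h₂ htr
  have hsym (g h : G) : σ₁ g 0 1 * σ₁ h 1 0 + σ₁ g 1 0 * σ₁ h 0 1 =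
      σ₂ g 0 1 * σ₂ h 1 0 + σ₂ g 1 0 * σ₂ h 0 1 := by
    have := htr (g * h)
    simp only [map_mul, trace_fin_two, mul_apply, Fin.sum_univ_two] at this
    linear_combination this - σ₂ h 0 0 * (hdiag g).1 - σ₁ g 0 0 * (hdiag h).1
      - σ₂ h 1 1 * (hdiag g).2 - σ₁ g 1 1 * (hdiag h).2
  have := hsym (g₀ * g) h
  simp only [map_mul, h₁, h₂, diagonal_mul, cons_val_zero, cons_val_one] at this
  apply mul_left_cancel₀ (sub_ne_zero.mpr hle)
  linear_combination this - e * hsym g h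

theorem exists_conj_of_trace_eq_of_eq_diagonal (hle : l ≠ e) (h₁ : σ₁ g₀ = diagonal ![l, e])
    (h₂ : σ₂ g₀ = diagonal ![l, e]) (htr : ∀ g, trace (σ₁ g) = trace (σ₂ g))
    (hirr : ¬ HasCommonEigenvector σ₁) :
    ∃ D : GL (Fin 2) K, ∀ g,
      σ₂ g = D * σ₁ g * ((D⁻¹ : GL (Fin 2) K) : Matrix (Fin 2) (Fin 2) K) := by
  obtain ⟨p, hp⟩ : ∃ p, σ₁ p 0 1 ≠ 0 := by
    by_contra! h
    refine hirr (hasCommonEigenvector_of_forall_apply_eq_zero σ₁ 1 fun g j hj => ?_)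
    fin_cases j
    · exact h g
    · exact absurd rfl hj
  obtain ⟨q, hq⟩ : ∃ q, σ₁ q 1 0 ≠ 0 := by
    by_contra! h
    refine hirr (hasCommonEigenvector_of_forall_apply_eq_zero σ₁ 0 fun g j hj => ?_)
    fin_cases j
    · exact absurd rfl hj
    · exact h g
  obtain ⟨s, hs, hoff⟩ :=
    exists_forall_eq_mul_of_mul_eq_mul (off_diag_mul_eq_of_trace_eq σ₁ σ₂ hle h₁ h₂ htr) hp hq
  have hdiag := diag_apply_eq_of_trace_eq σ₁ σ₂ hle h₁ h₂ htr
  have hinv : (diagonal ![s, 1])⁻¹ = diagonal ![s⁻¹, 1] :=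
    inv_eq_left_inv (by simp [diagonal_mul_diagonal, hs, ← diagonal_one])
  refine ⟨GeneralLinearGroup.mkOfDetNeZero (diagonal ![s, 1]) (by simp [hs]), fun g => ?_⟩
  rw [GeneralLinearGroup.coe_inv]
  change σ₂ g = diagonal ![s, 1] * σ₁ g * (diagonal ![s, 1])⁻¹
  ext i j
  rw [hinv]
  fin_cases i <;> fin_cases j <;>
    simp [diagonal_mul, mul_diagonal, hdiag, hoff, hs, mul_comm _ s⁻¹]

end Diagonal

theorem exists_specialLinearGroup_conj_eq {n : Type*} [Fintype n] [DecidableEq n] [Nonempty n]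
    [IsAlgClosed K] (P : GL n K) :
    ∃ A : SpecialLinearGroup n K, ∀ X : GL n K,
      SpecialLinearGroup.toGL A * X * (SpecialLinearGroup.toGL A)⁻¹ = P * X * P⁻¹ := by
  have hP : (P : Matrix n n K).det ≠ 0 := GeneralLinearGroup.det_ne_zero P
  obtain ⟨t, ht⟩ := IsAlgClosed.exists_pow_nat_eq (P : Matrix n n K).det⁻¹
    (Fintype.card_pos (α := n))
  have ht0 : t ≠ 0 := by
    rintro rfl
    exact inv_ne_zero hP (by rw [← ht, zero_pow (Fintype.card_pos (α := n)).ne'])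
  set c := GeneralLinearGroup.scalar n (Units.mk0 t ht0)
  have hdet : ((c * P : GL n K) : Matrix n n K).det = 1 := by
    simp [c, GeneralLinearGroup.coe_scalar, ht, hP]
  refine ⟨⟨_, hdet⟩, fun X => ?_⟩
  have hA : SpecialLinearGroup.toGL ⟨_, hdet⟩ = c * P := by ext; rfl
  rw [hA, _root_.mul_inv_rev, show c * P * X * (P⁻¹ * c⁻¹) = c * (P * X * P⁻¹) * c⁻¹ by group,
    GeneralLinearGroup.scalar_commute, mul_inv_cancel_right]

end

/-- An irreducible `SL(2,ℂ)`-representation of a group is determined up to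
conjugacy by its character `g ↦ tr ρ(g)`. -/
theorem conj_of_trace_eq {G : Type*} [Group G]
    (ρ₁ ρ₂ : G →* Matrix.SpecialLinearGroup (Fin 2) ℂ)
    (hirr : ¬ ∃ v : Fin 2 → ℂ, v ≠ 0 ∧ ∀ g : G, ∃ c : ℂ,
      Matrix.mulVec (ρ₁ g : Matrix (Fin 2) (Fin 2) ℂ) v = c • v)
    (htr : ∀ g : G, Matrix.trace (ρ₁ g : Matrix (Fin 2) (Fin 2) ℂ) =
      Matrix.trace (ρ₂ g : Matrix (Fin 2) (Fin 2) ℂ)) :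
    ∃ A : Matrix.SpecialLinearGroup (Fin 2) ℂ,
      ∀ g : G, ρ₂ g = A * ρ₁ g * A⁻¹ := by
  obtain ⟨g₀, hg₀⟩ : ∃ g₀, trace (ρ₁ g₀ : Matrix (Fin 2) (Fin 2) ℂ) ^ 2 ≠ 4 := by
    by_contra! h
    exact hirr (hasCommonEigenvector_of_trace_sq_eq_four ρ₁ h)
  obtain ⟨l, e, hle, hsum, hprod⟩ := exists_ne_add_eq_mul_eq_one hg₀
  obtain ⟨P₁, hP₁⟩ := exists_conj_eq_diagonal _ hle hsum (by rw [(ρ₁ g₀).2, hprod])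
  obtain ⟨P₂, hP₂⟩ := exists_conj_eq_diagonal _ hle (htr g₀ ▸ hsum) (by rw [(ρ₂ g₀).2, hprod])
  let σ (P : GL (Fin 2) ℂ) (ρ : G →* SL(2, ℂ)) : G →* Matrix (Fin 2) (Fin 2) ℂ :=
    (Units.coeHom _).comp ((MulAut.conj P).toMonoidHom.comp (SpecialLinearGroup.toGL.comp ρ))
  obtain ⟨D, hD⟩ := exists_conj_of_trace_eq_of_eq_diagonal (σ P₁ ρ₁) (σ P₂ ρ₂) hle hP₁ hP₂
    (fun g => (trace_units_conj _ _).trans ((htr g).trans (trace_units_conj _ _).symm))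
    (fun h => hirr h.of_conj)
  obtain ⟨A, hA⟩ := exists_specialLinearGroup_conj_eq (P₂⁻¹ * D * P₁)
  refine ⟨A, fun g => SpecialLinearGroup.toGL_injective ?_⟩
  rw [map_mul, map_mul, map_inv, hA]
  have : P₂ * SpecialLinearGroup.toGL (ρ₂ g) * P₂⁻¹ =
      D * (P₁ * SpecialLinearGroup.toGL (ρ₁ g) * P₁⁻¹) * D⁻¹ := Units.ext (hD g)
  calc SpecialLinearGroup.toGL (ρ₂ g)
      = P₂⁻¹ * (P₂ * SpecialLinearGroup.toGL (ρ₂ g) * P₂⁻¹) * P₂ := by group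
    _ = _ := by rw [this]; group
end
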